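/- Let χ be a non-principal Dirichlet character modulo N with χ(-1) = -1. Then h_N(z; τ, χ) = ∫_ℝ Φ_N(x; χ) e^{πiτx² - 2πzx} dx is an even function of z, i.e., h_N(-z; τ, χ) = h_N(z; τ, χ). -/

import Mathlib

open Finset Complex

noncomputable def PhiChi (N : ℕ) (χ : DirichletCharacter ℂ N) (t : ℂ) : ℂ :=
  (∑ k ∈ Finset.Ico 1 N, χ (k : ZMod N) * Complex.exp (2 * Real.pi * k * t / Real.sqrt N)) /
    (1 - Complex.exp (2 * Real.pi * t * Real.sqrt N))

noncomputable def hN (N : ℕ) (χ : DirichletCharacter ℂ N) (τ z : ℂ) : ℂ :=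
  ∫ x : ℝ, PhiChi N χ x *
    Complex.exp (Real.pi * Complex.I * τ * x ^ 2 - 2 * Real.pi * z * x)

/-! Writing `q = e^{w}` with `w = 2πt/√N`, we have `Φ_N(t; χ) = (Σ_{0<k<N} χ(k) q^k) / (1 - q^N)`.
For odd `χ` the substitution `k ↦ N - k` shows that the numerator at `q⁻¹` is `-q^{-N}` times
the numerator at `q`, and so is the denominator, hence `Φ_N(·; χ)` is even. The evenness of
`h_N(·; τ, χ)` follows by the change of variables `x ↦ -x` in the integral. -/

namespace DirichletCharacter

variable {N : ℕ} {χ : DirichletCharacter ℂ N}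

lemma Odd.sum_Ico_mul_exp_neg (hχ : χ.Odd) (w : ℂ) :
    ∑ k ∈ Ico 1 N, χ k * exp (k * -w) = -exp (N * -w) * ∑ k ∈ Ico 1 N, χ k * exp (k * w) := by
  have hreflect (g : ℕ → ℂ) : ∑ k ∈ Ico 1 N, g (N - k) = ∑ k ∈ Ico 1 N, g k := by
    rw [sum_Ico_reflect g 1 (Nat.le_succ N), Nat.add_sub_cancel_left, Nat.add_sub_cancel]
  rw [mul_sum, ← hreflect]
  refine sum_congr rfl fun k hk => ?_
  have hkN : k ≤ N := (mem_Ico.mp hk).2.le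
  have hχk : χ ((N - k : ℕ) : ZMod N) = -χ k := by
    rw [Nat.cast_sub hkN, ZMod.natCast_self, zero_sub, hχ.eval_neg]
  rw [hχk, Nat.cast_sub hkN, show ((N : ℂ) - k) * -w = N * -w + k * w by ring, exp_add]
  ring

end DirichletCharacter

lemma PhiChi_eq_div (N : ℕ) (χ : DirichletCharacter ℂ N) (t : ℂ) :
    PhiChi N χ t = (∑ k ∈ Ico 1 N, χ k * exp (k * (2 * Real.pi * t / Real.sqrt N))) /
      (1 - exp (N * (2 * Real.pi * t / Real.sqrt N))) := by
  have hdiv : (N : ℂ) / Real.sqrt N = Real.sqrt N := by exact_mod_cast Real.div_sqrt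
  rw [PhiChi]
  congr 1
  · exact sum_congr rfl fun k _ => by ring_nf
  · rw [mul_div_left_comm, hdiv]

lemma PhiChi_neg (N : ℕ) (χ : DirichletCharacter ℂ N) (hχ : χ.Odd) (t : ℂ) :
    PhiChi N χ (-t) = PhiChi N χ t := by
  rw [PhiChi_eq_div, PhiChi_eq_div, mul_neg, neg_div, hχ.sum_Ico_mul_exp_neg, mul_neg, exp_neg]
  set q := exp (N * (2 * Real.pi * t / Real.sqrt N))
  have hq : q ≠ 0 := exp_ne_zero _
  rw [← mul_div_mul_left _ (1 - q) (neg_ne_zero.mpr (inv_ne_zero hq))]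
  congr 1
  rw [neg_mul, mul_sub, mul_one, inv_mul_cancel₀ hq]
  ring

theorem hN_even_general (N : ℕ) (χ : DirichletCharacter ℂ N) (hodd : χ (-1) = -1)
    (τ : ℂ) (z : ℂ) :
    hN N χ τ (-z) = hN N χ τ z := by
  rw [hN, ← MeasureTheory.integral_neg_eq_self, hN]
  congr 1 with x
  rw [ofReal_neg, PhiChi_neg N χ hodd]
  ring_nf

theorem hN_even (N : ℕ) (χ : DirichletCharacter ℂ N) (hχ : χ ≠ 1) (hodd : χ (-1) = -1)
    (τ : ℂ) (hτ : 0 < τ.im) (z : ℂ) :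
    hN N χ τ (-z) = hN N χ τ z :=
  hN_even_general N χ hodd τ z
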